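/- arXiv:2007.14483 — 2 statements merged into one kernel-verified Lean document; each statement's English description precedes it below -/
import Mathlib

section
/- In a commutative idempotent involutive residuated lattice, for every element x and every y with 0_x ⊑ y ⊑ 1_x (monoidal order), one has ¬y = y → 0_x. -/
/-- A commutative idempotent involutive residuated lattice. -/
class CIdInRL (α : Type*) extends Lattice α, CommMonoid α, Zero α where
  arrow : α → α → α
  residuation : ∀ x y z : α, x * y ≤ z ↔ y ≤ arrow x z
  idem : ∀ x : α, x * x = x
  involutive : ∀ x : α, arrow (arrow x 0) 0 = x

namespace CIdInRL
variable {α : Type*} [CIdInRL α]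
/-- linear negation ¬x := x → 0 -/
def neg (x : α) : α := arrow x 0
/-- 0_x := x ∧ ¬x -/
def zx (x : α) : α := x ⊓ neg x
/-- 1_x := x ∨ ¬x -/
def ox (x : α) : α := x ⊔ neg x
/-- monoidal order x ⊑ y iff x·y = x -/
def mleq (x y : α) : Prop := x * y = x
end CIdInRL

/-! Implication is definable from product and negation, `a → z = ¬(a·¬z)`, and De Morgan gives
`¬0_x = 1_x`. Hence `y → 0_x = ¬(y·1_x)`, which is `¬y` because `y ⊑ 1_x`. -/

namespace CIdInRL
variable {α : Type*} [CIdInRL α]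

lemma neg_neg (a : α) : neg (neg a) = a := involutive a

lemma le_neg_iff {a b : α} : a ≤ neg b ↔ b * a ≤ 0 := (residuation b a 0).symm

lemma le_neg_comm {a b : α} : a ≤ neg b ↔ b ≤ neg a := by
  rw [le_neg_iff, le_neg_iff, mul_comm]

lemma neg_le_comm {a b : α} : neg a ≤ b ↔ neg b ≤ a := by
  simpa only [neg_neg] using le_neg_comm (a := neg a) (b := neg b)

lemma arrow_eq_neg_mul_neg (a z : α) : arrow a z = neg (a * neg z) := by
  refine eq_of_forall_le_iff fun w => ?_
  calc w ≤ arrow a z ↔ a * w ≤ neg (neg z) := by rw [neg_neg]; exact (residuation a w z).symm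
    _ ↔ neg z * (a * w) ≤ 0 := le_neg_iff
    _ ↔ a * neg z * w ≤ 0 := by rw [mul_left_comm, mul_assoc]
    _ ↔ w ≤ neg (a * neg z) := le_neg_iff.symm

lemma neg_inf (a b : α) : neg (a ⊓ b) = neg a ⊔ neg b := by
  refine eq_of_forall_ge_iff fun c => ?_
  simp only [neg_le_comm (b := c), le_inf_iff, sup_le_iff]

lemma neg_zx (x : α) : neg (zx x) = ox x := by
  rw [zx, ox, neg_inf, neg_neg, sup_comm]

end CIdInRL

open CIdInRL in
theorem stmt3 {α : Type*} [CIdInRL α] (x y : α)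
    (hy : mleq (zx x) y ∧ mleq y (ox x)) :
    neg y = arrow y (zx x) := by
  rw [arrow_eq_neg_mul_neg, neg_zx, hy.2]
end

section
/- In a commutative idempotent involutive residuated lattice, the set {0_x | x ∈ A} equals {x | x ≤ 0}, and this set with operations · and ∨ is a distributive sublattice with maximum element 0. -/
/-!
Residuation makes `·` monotone and join-preserving. From `¬1 = 0` and involution, `¬0 = 1`, and
idempotence gives `0 · 0 ≤ 0`, i.e. `0 ≤ ¬0 = 1`. Below `1` idempotence turns `·` into `⊓`,
since `a ⊓ b = (a ⊓ b)² ≤ a · b`; so on the cone `{x | x ≤ 0}` the meet is the product, which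
distributes over `⊔`. Every `0_x` lies in the cone as `0_x = 0_x · 0_x ≤ x · ¬x ≤ 0`, and every
`a ≤ 0` satisfies `a · a ≤ 0`, i.e. `a ≤ ¬a`, so `a = 0_a`.
-/

namespace CIdInRL

variable {α : Type*} [CIdInRL α]

lemma le_arrow_iff {x y z : α} : y ≤ arrow x z ↔ x * y ≤ z :=
  (residuation x y z).symm

protected lemma mul_le_mul_left (x : α) {y z : α} (h : y ≤ z) : x * y ≤ x * z :=
  le_arrow_iff.mp (h.trans (le_arrow_iff.mpr le_rfl))

protected lemma mul_le_mul {a b c d : α} (hab : a ≤ b) (hcd : c ≤ d) : a * c ≤ b * d :=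
  calc a * c ≤ a * d := CIdInRL.mul_le_mul_left a hcd
    _ = d * a := mul_comm a d
    _ ≤ d * b := CIdInRL.mul_le_mul_left d hab
    _ = b * d := mul_comm d b

protected lemma mul_sup (a b c : α) : a * (b ⊔ c) = a * b ⊔ a * c :=
  le_antisymm
    (le_arrow_iff.mp (sup_le (le_arrow_iff.mpr le_sup_left) (le_arrow_iff.mpr le_sup_right)))
    (sup_le (CIdInRL.mul_le_mul_left a le_sup_left) (CIdInRL.mul_le_mul_left a le_sup_right))

protected lemma sup_mul (a b c : α) : (a ⊔ b) * c = a * c ⊔ b * c := by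
  simp only [mul_comm _ c, CIdInRL.mul_sup]

lemma mul_neg_le_zero (x : α) : x * neg x ≤ 0 :=
  le_arrow_iff.mp le_rfl

lemma le_neg_self_iff {a : α} : a ≤ neg a ↔ a ≤ 0 := by
  rw [neg, le_arrow_iff, idem]

lemma neg_one : neg (1 : α) = 0 :=
  le_antisymm (one_mul (neg (1 : α)) ▸ mul_neg_le_zero 1) (le_arrow_iff.mpr (one_mul 0).le)

lemma neg_zero : neg (0 : α) = 1 := by
  rw [← neg_one, neg, neg, involutive]

protected lemma zero_le_one : (0 : α) ≤ 1 :=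
  neg_zero (α := α) ▸ le_neg_self_iff.mpr le_rfl

protected lemma mul_le_of_le_one_right {a b : α} (hb : b ≤ 1) : a * b ≤ a :=
  (CIdInRL.mul_le_mul_left a hb).trans_eq (mul_one a)

protected lemma mul_le_of_le_one_left {a b : α} (ha : a ≤ 1) : a * b ≤ b :=
  mul_comm b a ▸ CIdInRL.mul_le_of_le_one_right ha

lemma mul_eq_inf_of_le_one {a b : α} (ha : a ≤ 1) (hb : b ≤ 1) : a * b = a ⊓ b :=
  le_antisymm
    (le_inf (CIdInRL.mul_le_of_le_one_right hb) (CIdInRL.mul_le_of_le_one_left ha))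
    (idem (a ⊓ b) ▸ CIdInRL.mul_le_mul inf_le_left inf_le_right)

lemma sup_mul_sup_of_le_one (a : α) {b c : α} (hb : b ≤ 1) (hc : c ≤ 1) :
    (a ⊔ b) * (a ⊔ c) = a ⊔ b * c := by
  have hba : b * a ≤ a := CIdInRL.mul_le_of_le_one_left hb
  have hac : a * c ≤ a := CIdInRL.mul_le_of_le_one_right hc
  rw [CIdInRL.mul_sup, CIdInRL.sup_mul, CIdInRL.sup_mul, idem, sup_eq_left.mpr hba,
    ← sup_assoc, sup_eq_left.mpr hac]

lemma zx_le_zero (x : α) : zx x ≤ 0 :=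
  calc zx x = zx x * zx x := (idem _).symm
    _ ≤ x * neg x := CIdInRL.mul_le_mul inf_le_left inf_le_right
    _ ≤ 0 := mul_neg_le_zero x

lemma zx_eq_self_of_le_zero {a : α} (ha : a ≤ 0) : zx a = a :=
  inf_eq_left.mpr (le_neg_self_iff.mpr ha)

end CIdInRL

open CIdInRL in
theorem stmt8 {α : Type*} [CIdInRL α] :
    ({z : α | ∃ x : α, z = zx x} = {z : α | z ≤ 0}) ∧
    (∀ a b : α, a ≤ 0 → b ≤ 0 → a * b ≤ 0 ∧ a ⊔ b ≤ 0) ∧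
    ((0 : α) ≤ 0) ∧ (∀ a : α, a ≤ 0 → a ≤ 0) ∧
    (∀ a b : α, a ≤ 0 → b ≤ 0 → a * b = a ⊓ b) ∧
    (∀ a b c : α, a ≤ 0 → b ≤ 0 → c ≤ 0 → a ⊔ (b * c) = (a ⊔ b) * (a ⊔ c)) := by
  have le_one {a : α} (ha : a ≤ 0) : a ≤ 1 := ha.trans CIdInRL.zero_le_one
  refine ⟨?_, fun a b ha hb => ⟨(CIdInRL.mul_le_of_le_one_right (le_one hb)).trans ha,
    sup_le ha hb⟩, le_rfl, fun _ ha => ha,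
    fun a b ha hb => mul_eq_inf_of_le_one (le_one ha) (le_one hb),
    fun a b c _ hb hc => (sup_mul_sup_of_le_one a (le_one hb) (le_one hc)).symm⟩
  ext z
  exact ⟨by rintro ⟨x, rfl⟩; exact zx_le_zero x, fun hz => ⟨z, (zx_eq_self_of_le_zero hz).symm⟩⟩
end
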